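/- Let (λ_n) be a sequence of nonzero complex numbers with λ_n → ∞, θ ∈ (0,1), and G a nonconstant entire function. Then there is no entire function f and no sequence (m_n) with m_n ∈ {λ_k : k ∈ ℕ} such that for every compact L ⊆ ℂ, sup_{(t,z)∈[0,θ]×L} |f(z + m_n e^{2πit}) − G(z)| → 0 as n → ∞. (Main theorem: U(λ,θ,G) = ∅.) -/

import Mathlib

/-!
Suppose `f (z + mₙ e^{2πit}) → G z` uniformly on `[0, θ] × L`. Since `|mₙ|` is bounded below and
`e^{2πiθ} ≠ 1`, for every small `s > 0` there are `tₙ ∈ [0, θ]` with `dₙ = mₙ (e^{2πitₙ} - 1)` of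
modulus `s`. Then `f (mₙ e^{2πitₙ})` is at the same time close to `G 0` (take `z = 0`, `t = tₙ`)
and close to `G dₙ` (take `z = dₙ`, `t = 0`). Along a subsequence `dₙ → p` with `|p| = s`, so
`G p = G 0`. Hence `G` takes the value `G 0` on circles of arbitrarily small radius around `0`,
and the identity theorem makes `G` constant.
-/

open Complex Filter Set Topology Metric

theorem exp_two_pi_mul_I_ne_one {θ : ℝ} (hθ : θ ∈ Ioo 0 1) :
    exp (2 * Real.pi * I * θ) ≠ 1 := by
  rw [Ne, exp_eq_one_iff]
  rintro ⟨n, hn⟩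
  have hθn : θ = n := by
    have h2πI : (2 * Real.pi * I : ℂ) ≠ 0 := by simp [Real.pi_ne_zero]
    exact_mod_cast mul_right_cancel₀ h2πI (by rw [← hn]; ring : (θ : ℂ) * _ = n * _)
  have h0 : (0 : ℝ) < n := hθn ▸ hθ.1
  have h1 : (n : ℝ) < 1 := hθn ▸ hθ.2
  norm_cast at h0 h1
  omega

theorem exists_norm_mul_exp_sub_one_eq (μ : ℂ) {θ s : ℝ} (hθ : 0 ≤ θ)
    (hs : s ∈ Icc 0 ‖μ * (exp (2 * Real.pi * I * θ) - 1)‖) :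
    ∃ t ∈ Icc 0 θ, ‖μ * (exp (2 * Real.pi * I * t) - 1)‖ = s := by
  have hcont : Continuous fun t : ℝ => ‖μ * (exp (2 * Real.pi * I * t) - 1)‖ := by fun_prop
  refine intermediate_value_Icc hθ hcont.continuousOn ?_
  simpa using hs

theorem exists_mem_sphere_eq_zero_of_tendstoUniformlyOn {E : Type*} [UniformSpace E] [T2Space E]
    {f G : ℂ → E} (hG : Continuous G)
    {m : ℕ → ℂ} {θ s : ℝ} (hθ : 0 ≤ θ) (hs : 0 ≤ s)
    (hsm : ∀ n, s ≤ ‖m n * (exp (2 * Real.pi * I * θ) - 1)‖)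
    (hconv : TendstoUniformlyOn
      (fun n (p : ℝ × ℂ) => f (p.2 + m n * exp (2 * Real.pi * I * p.1)))
      (fun p => G p.2) atTop (Icc 0 θ ×ˢ closedBall 0 s)) :
    ∃ p ∈ sphere 0 s, G p = G 0 := by
  choose t ht hts using fun n => exists_norm_mul_exp_sub_one_eq (m n) hθ ⟨hs, hsm n⟩
  set d : ℕ → ℂ := fun n => m n * (exp (2 * Real.pi * I * t n) - 1)
  have hd : ∀ n, (t n, d n) ∈ Icc 0 θ ×ˢ sphere 0 s := fun n =>
    ⟨ht n, mem_sphere_zero_iff_norm.2 (hts n)⟩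
  obtain ⟨⟨τ, p⟩, ⟨-, hp⟩, φ, hφ, hlim⟩ :=
    (isCompact_Icc.prod (isCompact_sphere 0 s)).tendsto_subseq hd
  have hsub : TendstoUniformlyOn
      (fun j (q : ℝ × ℂ) => f (q.2 + m (φ j) * exp (2 * Real.pi * I * q.1)))
      (fun q => G q.2) atTop (Icc 0 θ ×ˢ closedBall 0 s) :=
    fun u hu => hφ.tendsto_atTop.eventually (hconv u hu)
  have hGc : Continuous fun q : ℝ × ℂ => G q.2 := hG.comp continuous_snd
  have hmem : ∀ n, (t n, (0 : ℂ)) ∈ Icc 0 θ ×ˢ closedBall 0 s ∧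
      ((0 : ℝ), d n) ∈ Icc 0 θ ×ˢ closedBall 0 s := fun n =>
    ⟨⟨ht n, mem_closedBall_self hs⟩, ⟨⟨le_rfl, hθ⟩, sphere_subset_closedBall (hd n).2⟩⟩
  have hlim_zero : Tendsto (fun j => f (0 + m (φ j) * exp (2 * Real.pi * I * t (φ j))))
      atTop (𝓝 (G 0)) :=
    hsub.tendsto_comp (x := (τ, 0)) hGc.continuousWithinAt <| tendsto_nhdsWithin_iff.2
      ⟨((continuous_fst.tendsto _).comp hlim).prodMk_nhds tendsto_const_nhds,
        Eventually.of_forall fun j => (hmem (φ j)).1⟩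
  have hlim_p : Tendsto (fun j => f (d (φ j) + m (φ j) * exp (2 * Real.pi * I * (0 : ℝ))))
      atTop (𝓝 (G p)) :=
    hsub.tendsto_comp (x := (0, p)) hGc.continuousWithinAt <| tendsto_nhdsWithin_iff.2
      ⟨tendsto_const_nhds.prodMk_nhds ((continuous_snd.tendsto _).comp hlim),
        Eventually.of_forall fun j => (hmem (φ j)).2⟩
  refine ⟨p, hp, tendsto_nhds_unique (hlim_p.congr fun j => ?_) hlim_zero⟩
  simp only [d, ofReal_zero, mul_zero, exp_zero]
  ring

theorem Differentiable.eq_of_forall_sphere {E : Type*} [NormedAddCommGroup E] [NormedSpace ℂ E]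
    [CompleteSpace E] {G : ℂ → E} (hG : Differentiable ℂ G) {z₀ : ℂ} {ε : ℝ} (hε : 0 < ε)
    (h : ∀ s ∈ Ioo 0 ε, ∃ p ∈ sphere z₀ s, G p = G z₀) (z : ℂ) : G z = G z₀ := by
  have hfreq : ∃ᶠ w in 𝓝[≠] z₀, G w = G z₀ := by
    refine frequently_iff.2 fun {U} hU => ?_
    obtain ⟨δ, hδ, hball⟩ := Metric.mem_nhdsWithin_iff.1 hU
    have hr : min (δ / 2) (ε / 2) ∈ Ioo 0 ε :=
      ⟨by positivity, (min_le_right _ _).trans_lt (half_lt_self hε)⟩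
    obtain ⟨p, hp, hGp⟩ := h _ hr
    refine ⟨p, hball ⟨?_, ?_⟩, hGp⟩
    · rw [mem_ball, mem_sphere.1 hp]
      exact (min_le_left _ _).trans_lt (half_lt_self hδ)
    · rintro rfl
      exact hr.1.ne (by simpa using hp)
  exact congrFun ((hG.differentiableOn.analyticOnNhd isOpen_univ).eq_of_frequently_eq
    analyticOnNhd_const hfreq) z

theorem stmt_8 (lam : ℕ → ℂ) (hlam0 : ∀ n, lam n ≠ 0)
    (hlam : Tendsto (fun n => ‖lam n‖) atTop atTop)
    (θ : ℝ) (hθ : θ ∈ Set.Ioo (0:ℝ) 1)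
    (G : ℂ → ℂ) (hG : Differentiable ℂ G) (hGnc : ¬ ∃ c : ℂ, ∀ z, G z = c) :
    ¬ ∃ (f : ℂ → ℂ) (m : ℕ → ℂ), Differentiable ℂ f ∧ (∀ n, ∃ k, m n = lam k) ∧
      ∀ L : Set ℂ, IsCompact L →
        TendstoUniformlyOn
          (fun n (p : ℝ × ℂ) => f (p.2 + m n * Complex.exp (2 * Real.pi * Complex.I * p.1)))
          (fun p => G p.2) atTop (Set.Icc 0 θ ×ˢ L) := by
  rintro ⟨f, m, -, hm, hconv⟩
  rw [← Nat.cofinite_eq_atTop] at hlam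
  obtain ⟨k₀, hk₀⟩ := hlam.exists_forall_le
  have hε : 0 < ‖lam k₀ * (exp (2 * Real.pi * I * θ) - 1)‖ :=
    norm_pos_iff.2 (mul_ne_zero (hlam0 k₀) (sub_ne_zero.2 (exp_two_pi_mul_I_ne_one hθ)))
  refine hGnc ⟨G 0, hG.eq_of_forall_sphere hε fun s hs => ?_⟩
  refine exists_mem_sphere_eq_zero_of_tendstoUniformlyOn hG.continuous hθ.1.le hs.1.le
    (fun n => ?_) (hconv _ (isCompact_closedBall 0 s))
  obtain ⟨k, hk⟩ := hm n
  rw [hk, norm_mul]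
  rw [norm_mul] at hs
  exact hs.2.le.trans (mul_le_mul_of_nonneg_right (hk₀ k) (norm_nonneg _))
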